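/- If T is a tree with at least two vertices, then the Cartesian product graph T □ K₃ has divisorial gonality gon(T □ K₃) = 3. -/

import Mathlib

/-- A finite loopless multigraph: a finite vertex type, a finite edge type,
and an assignment of an unordered pair of distinct endpoints to each edge. -/
structure Multigraph where
  V : Type
  E : Type
  [fintypeV : Fintype V]
  [fintypeE : Fintype E]
  [decEqV : DecidableEq V]
  ends : E → Sym2 V
  loopless : ∀ e, ¬ (ends e).IsDiag

attribute [instance] Multigraph.fintypeV Multigraph.fintypeE Multigraph.decEqV

namespace Multigraph

/-- The graph obtained by deleting the edges in `W` is connected (finite graphs are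
connected iff the vertex set is nonempty and every nonempty proper vertex subset
has an edge leaving it). -/
def ConnectedWithout (G : Multigraph) (W : Set G.E) : Prop :=
  Nonempty G.V ∧
    ∀ A : Finset G.V, A.Nonempty → A ≠ Finset.univ →
      ∃ e, e ∉ W ∧ ∃ u v, G.ends e = s(u, v) ∧ u ∈ A ∧ v ∉ A

/-- `G` is connected. -/
def Connected (G : Multigraph) : Prop := G.ConnectedWithout ∅

/-- `G` is `k`-edge-connected: deleting any set of at most `k - 1` edges
leaves a connected graph. -/
def EdgeConnected (G : Multigraph) (k : ℕ) : Prop :=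
  ∀ W : Finset G.E, W.card < k → G.ConnectedWithout ↑W

/-- An edge is a bridge if deleting it disconnects the graph. -/
def IsBridge (G : Multigraph) (e : G.E) : Prop := ¬ G.ConnectedWithout {e}

/-- The graph obtained by deleting the vertices in `U` (and all incident edges)
is connected. -/
def ConnectedAvoiding (G : Multigraph) (U : Set G.V) : Prop :=
  (∃ v, v ∉ U) ∧
    ∀ A : Finset G.V, A.Nonempty → (∀ a ∈ A, a ∉ U) → (∃ w, w ∉ U ∧ w ∉ A) →
      ∃ e u v, G.ends e = s(u, v) ∧ u ∈ A ∧ v ∉ A ∧ v ∉ U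

/-- `G` is `k`-vertex-connected: deleting any set of at most `k - 1` vertices
leaves a connected graph. -/
def VertexConnected (G : Multigraph) (k : ℕ) : Prop :=
  ∀ U : Finset G.V, U.card < k → G.ConnectedAvoiding ↑U

/-- `G` is simple: no two distinct edges have the same pair of endpoints. -/
def Simple (G : Multigraph) : Prop :=
  ∀ e e' : G.E, G.ends e = G.ends e' → e = e'

/-- The genus `g(G) = |E| - |V| + 1`. -/
def genus (G : Multigraph) : ℤ :=
  (Fintype.card G.E : ℤ) - (Fintype.card G.V : ℤ) + 1

/-- A tree is a connected graph of genus 0. -/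
def IsTree (G : Multigraph) : Prop := G.Connected ∧ G.genus = 0

/-- The number of edges joining `u` and `v`. -/
noncomputable def numEdges (G : Multigraph) (u v : G.V) : ℕ :=
  Set.ncard {e : G.E | G.ends e = s(u, v)}

/-- The valence of a vertex: the number of incident edges. -/
noncomputable def valence (G : Multigraph) (v : G.V) : ℕ :=
  Set.ncard {e : G.E | v ∈ G.ends e}

/-- A divisor on `G`: an element of the free abelian group on `V(G)`. -/
abbrev Divisor (G : Multigraph) : Type := G.V → ℤ

/-- The degree of a divisor: the sum of its coefficients. -/
def degree (G : Multigraph) (D : G.Divisor) : ℤ := ∑ v, D v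

/-- A divisor is effective if all its coefficients are nonnegative. -/
def Effective (G : Multigraph) (D : G.Divisor) : Prop := ∀ v, 0 ≤ D v

/-- The Laplacian of `G` applied to an integer vector `f`. -/
noncomputable def laplacian (G : Multigraph) (f : G.V → ℤ) : G.Divisor :=
  fun v => ∑ w, (G.numEdges v w : ℤ) * (f v - f w)

/-- Linear equivalence of divisors: the difference is in the image of the Laplacian. -/
def LinEquiv (G : Multigraph) (D D' : G.Divisor) : Prop :=
  ∃ f : G.V → ℤ, D - D' = G.laplacian f

/-- `D - F` is equivalent to an effective divisor for every effective `F` of degree `k`. -/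
def RankGe (G : Multigraph) (D : G.Divisor) (k : ℤ) : Prop :=
  ∀ F : G.Divisor, G.Effective F → G.degree F = k →
    ∃ E' : G.Divisor, G.Effective E' ∧ G.LinEquiv (D - F) E'

/-- The Baker–Norine rank of a divisor. -/
noncomputable def rank (G : Multigraph) (D : G.Divisor) : ℤ :=
  sSup {r : ℤ | r = -1 ∨ (0 ≤ r ∧ G.RankGe D r)}

/-- The (divisorial) gonality of `G`: the minimum degree of an effective divisor
of rank at least 1. -/
noncomputable def gonality (G : Multigraph) : ℕ :=
  sInf {n : ℕ | ∃ D : G.Divisor, G.Effective D ∧ G.degree D = (n : ℤ) ∧ 1 ≤ G.rank D}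

end Multigraph

/-- A morphism of multigraphs: vertices map to vertices, and each edge maps either
to an edge joining the images of its endpoints (if they are distinct) or to the
common image of its endpoints. -/
structure Morphism (G G' : Multigraph) where
  vertexMap : G.V → G'.V
  edgeMap : G.E → G'.E ⊕ G'.V
  map_edge_of_eq : ∀ e u v, G.ends e = s(u, v) → vertexMap u = vertexMap v →
    edgeMap e = Sum.inr (vertexMap u)
  map_edge_of_ne : ∀ e u v, G.ends e = s(u, v) → vertexMap u ≠ vertexMap v →
    ∃ e', edgeMap e = Sum.inl e' ∧ G'.ends e' = s(vertexMap u, vertexMap v)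

namespace Morphism

variable {G G' : Multigraph}

/-- The multiplicity `m_φ(v)` of `φ` at `v` with respect to an edge `e'` of `G'`. -/
noncomputable def mult (φ : Morphism G G') (v : G.V) (e' : G'.E) : ℕ :=
  Set.ncard {e : G.E | v ∈ G.ends e ∧ φ.edgeMap e = Sum.inl e'}

/-- `φ` is harmonic if `m_φ(v)` does not depend on the chosen edge `e'`
incident to `φ(v)`. -/
def Harmonic (φ : Morphism G G') : Prop :=
  ∀ (v : G.V) (e₁ e₂ : G'.E),
    φ.vertexMap v ∈ G'.ends e₁ → φ.vertexMap v ∈ G'.ends e₂ →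
      φ.mult v e₁ = φ.mult v e₂

/-- `φ` is non-degenerate if `m_φ(v) > 0` for every vertex `v`. -/
def Nondegenerate (φ : Morphism G G') : Prop :=
  ∀ (v : G.V) (e' : G'.E), φ.vertexMap v ∈ G'.ends e' → 0 < φ.mult v e'

/-- `φ` has degree `d`: every edge of `G'` has exactly `d` preimages. -/
def HasDegree (φ : Morphism G G') (d : ℕ) : Prop :=
  Nonempty G'.E ∧ ∀ e' : G'.E, Set.ncard {e : G.E | φ.edgeMap e = Sum.inl e'} = d

end Morphism

/-- The Cartesian product `G □ H` of two multigraphs. -/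
noncomputable def cartesianProduct (G H : Multigraph) : Multigraph where
  V := G.V × H.V
  E := (G.E × H.V) ⊕ (G.V × H.E)
  ends := fun e =>
    match e with
    | Sum.inl (e, w) => Sym2.map (fun u => (u, w)) (G.ends e)
    | Sum.inr (v, f) => Sym2.map (fun w => (v, w)) (H.ends f)
  loopless := by
    rintro (⟨e, w⟩ | ⟨v, f⟩) h
    all_goals dsimp only at h
    · have hG := G.loopless e
      generalize hq : G.ends e = q at h hG
      induction q using Sym2.ind with
      | _ x y =>
        rw [Sym2.map_pair_eq, Sym2.mk_isDiag_iff] at h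
        exact hG (Sym2.mk_isDiag_iff.mpr (congrArg Prod.fst h))
    · have hH := H.loopless f
      generalize hq : H.ends f = q at h hH
      induction q using Sym2.ind with
      | _ x y =>
        rw [Sym2.map_pair_eq, Sym2.mk_isDiag_iff] at h
        exact hH (Sym2.mk_isDiag_iff.mpr (congrArg Prod.snd h))

/-- The complete graph `K₃` on three vertices. -/
def K3 : Multigraph where
  V := Fin 3
  E := Fin 3
  ends := fun k => s(k + 1, k + 2)
  loopless := by decide

/-!
Upper bound: in a tree every edge `uv` is a bridge, and firing the side of `u` moves one chip
from `u` to `v`; so all vertices of a tree are linearly equivalent, and lifting the firing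
scripts along the projection `T □ K₃ → T` makes all fibres `{v} × K₃` equivalent. The fibre
divisor therefore has rank at least one: a chip at `(w, j)` is removed from the fibre over `w`.

Lower bound: every cut of `T □ K₃` has at least three edges (a split fibre contributes two, a
split layer `T × {i}` one). If `D - D' = Δf` with `D`, `D'` effective, firing the maximizers of
`f` sends a chip across every edge of a cut, so `deg D` is at least the size of that cut unless
`D = D'`. Hence an effective divisor of degree at most two is alone in its class, and if it had
positive rank it would contain every vertex.
-/

lemma Sym2.map_prodMk_left_eq_mk_iff {α β : Type*} (z : Sym2 α) (w : β) (p q : α × β) :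
    Sym2.map (·, w) z = s(p, q) ↔ z = s(p.1, q.1) ∧ w = p.2 ∧ w = q.2 := by
  obtain ⟨a, i⟩ := p
  obtain ⟨b, j⟩ := q
  induction z using Sym2.ind with
  | _ x y =>
    simp only [Sym2.map_mk, Sym2.eq_iff, Prod.mk.injEq]
    constructor
    · rintro (⟨⟨rfl, rfl⟩, rfl, rfl⟩ | ⟨⟨rfl, rfl⟩, rfl, rfl⟩) <;> simp
    · rintro ⟨(⟨rfl, rfl⟩ | ⟨rfl, rfl⟩), rfl, rfl⟩ <;> simp

lemma Fin.exists_two_add_one_ne_add_two (p : Fin 3 → Bool) (hp : ∃ i j, p i ≠ p j) :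
    ∃ k₁ k₂ : Fin 3,
      k₁ ≠ k₂ ∧ p (k₁ + 1) ≠ p (k₁ + 2) ∧ p (k₂ + 1) ≠ p (k₂ + 2) := by
  revert p
  decide

namespace Multigraph

open Finset

section Divisors

variable {G : Multigraph}

lemma numEdges_comm (u v : G.V) : G.numEdges u v = G.numEdges v u := by
  rw [numEdges, numEdges, Sym2.eq_swap]

lemma numEdges_eq_card_filter (u v : G.V) :
    G.numEdges u v = #{e | G.ends e = s(u, v)} := by
  rw [numEdges, Set.ncard_eq_toFinset_card']
  simp

lemma degree_add (D D' : G.Divisor) : G.degree (D + D') = G.degree D + G.degree D' :=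
  sum_add_distrib

lemma degree_sub (D D' : G.Divisor) : G.degree (D - D') = G.degree D - G.degree D' :=
  sum_sub_distrib ..

lemma degree_single (v : G.V) (n : ℤ) : G.degree (Pi.single v n) = n := by
  simp [degree]

lemma Effective.degree_nonneg {D : G.Divisor} (hD : G.Effective D) : 0 ≤ G.degree D :=
  sum_nonneg fun v _ => hD v

lemma Effective.add {D D' : G.Divisor} (hD : G.Effective D) (hD' : G.Effective D') :
    G.Effective (D + D') :=
  fun v => add_nonneg (hD v) (hD' v)

lemma effective_single (v : G.V) {n : ℤ} (hn : 0 ≤ n) : G.Effective (Pi.single v n) := by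
  intro w
  rw [Pi.single_apply]
  split_ifs <;> omega

lemma Effective.eq_single_of_degree_eq_one {D : G.Divisor} (hD : G.Effective D)
    (h : G.degree D = 1) : ∃ v, D = Pi.single v 1 := by
  obtain ⟨v, hv⟩ : ∃ v, 0 < D v := by
    by_contra! hle
    have : G.degree D ≤ 0 := sum_nonpos fun v _ => hle v
    omega
  have hsplit : D v + ∑ w ∈ univ.erase v, D w = 1 := by
    rw [add_sum_erase _ _ (mem_univ v)]; exact h
  have hrest : ∑ w ∈ univ.erase v, D w = 0 := by
    have := sum_nonneg fun w (_ : w ∈ univ.erase v) => hD w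
    omega
  refine ⟨v, funext fun w => ?_⟩
  rcases eq_or_ne w v with rfl | hwv
  · simp only [Pi.single_eq_same]; omega
  · rw [Pi.single_eq_of_ne hwv]
    exact (sum_eq_zero_iff_of_nonneg fun w _ => hD w).mp hrest w
      (mem_erase.mpr ⟨hwv, mem_univ w⟩)

lemma sum_sum_numEdges_mul_sub (f : G.V → ℤ) (A : Finset G.V) :
    ∑ x ∈ A, ∑ w ∈ A, (G.numEdges x w : ℤ) * (f x - f w) = 0 := by
  have hswap : ∑ x ∈ A, ∑ w ∈ A, (G.numEdges x w : ℤ) * (f x - f w)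
      = -∑ x ∈ A, ∑ w ∈ A, (G.numEdges x w : ℤ) * (f x - f w) := by
    refine sum_comm.trans ?_
    rw [← sum_neg_distrib]
    refine sum_congr rfl fun w _ => ?_
    rw [← sum_neg_distrib]
    refine sum_congr rfl fun x _ => ?_
    rw [numEdges_comm w x]; ring
  omega

lemma degree_laplacian (f : G.V → ℤ) : G.degree (G.laplacian f) = 0 :=
  sum_sum_numEdges_mul_sub f univ

lemma laplacian_add (f g : G.V → ℤ) : G.laplacian (f + g) = G.laplacian f + G.laplacian g := by
  funext v
  simp only [laplacian, Pi.add_apply, ← sum_add_distrib]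
  exact sum_congr rfl fun w _ => by ring

namespace LinEquiv

lemma refl (D : G.Divisor) : G.LinEquiv D D :=
  ⟨0, funext fun v => by simp [laplacian]⟩

lemma trans {D D' D'' : G.Divisor} (h : G.LinEquiv D D') (h' : G.LinEquiv D' D'') :
    G.LinEquiv D D'' := by
  obtain ⟨f, hf⟩ := h
  obtain ⟨g, hg⟩ := h'
  exact ⟨f + g, by rw [laplacian_add, ← hf, ← hg]; abel⟩

lemma add_right {D D' : G.Divisor} (h : G.LinEquiv D D') (Z : G.Divisor) :
    G.LinEquiv (D + Z) (D' + Z) := by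
  simpa only [LinEquiv, add_sub_add_right_eq_sub] using h

lemma sub_right {D D' : G.Divisor} (h : G.LinEquiv D D') (Z : G.Divisor) :
    G.LinEquiv (D - Z) (D' - Z) := by
  simpa only [LinEquiv, sub_sub_sub_cancel_right] using h

lemma degree_eq {D D' : G.Divisor} (h : G.LinEquiv D D') : G.degree D = G.degree D' := by
  obtain ⟨f, hf⟩ := h
  have := degree_laplacian (G := G) f
  rw [← hf, degree_sub] at this
  omega

end LinEquiv

section Rank

variable [Nonempty G.V]

lemma RankGe.le_degree {D : G.Divisor} {r : ℤ} (hr : 0 ≤ r) (h : G.RankGe D r) :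
    r ≤ G.degree D := by
  obtain ⟨v⟩ := ‹Nonempty G.V›
  obtain ⟨E, hE, hDE⟩ := h (Pi.single v r) (effective_single v hr) (degree_single v r)
  have := hDE.degree_eq
  rw [degree_sub, degree_single] at this
  linarith [hE.degree_nonneg]

lemma RankGe.mono {D : G.Divisor} {r k : ℤ} (h : G.RankGe D r) (hkr : k ≤ r) :
    G.RankGe D k := by
  obtain ⟨v⟩ := ‹Nonempty G.V›
  intro F hF hFk
  -- pad `F` up to degree `r` by chips at `v`, then take them back
  set Z : G.Divisor := Pi.single v (r - k)
  have hZ : G.Effective Z := effective_single v (by omega)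
  obtain ⟨E, hE, hDE⟩ := h (F + Z) (hF.add hZ) (by rw [degree_add, degree_single, hFk]; ring)
  refine ⟨E + Z, hE.add hZ, ?_⟩
  simpa only [sub_add_eq_sub_sub, sub_add_cancel] using hDE.add_right Z

lemma bddAbove_rankSet (D : G.Divisor) :
    BddAbove {r : ℤ | r = -1 ∨ (0 ≤ r ∧ G.RankGe D r)} := by
  refine ⟨max (G.degree D) 0, ?_⟩
  rintro r (rfl | ⟨hr, hrank⟩)
  · exact (show (-1 : ℤ) ≤ 0 by norm_num).trans (le_max_right _ _)
  · exact (hrank.le_degree hr).trans (le_max_left _ _)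

lemma le_rank_iff {D : G.Divisor} {k : ℤ} (hk : 0 ≤ k) : k ≤ G.rank D ↔ G.RankGe D k := by
  constructor
  · intro h
    rcases Int.csSup_mem ⟨-1, Or.inl rfl⟩ (bddAbove_rankSet D) with h1 | ⟨-, hsup⟩
    · rw [rank, h1] at h; omega
    · exact hsup.mono h
  · exact fun h => le_csSup (bddAbove_rankSet D) (Or.inr ⟨hk, h⟩)

end Rank

end Divisors

section Cuts

variable {G : Multigraph}

def cutEdges (G : Multigraph) (A : Finset G.V) : Finset G.E :=
  {e | ∃ u v, G.ends e = s(u, v) ∧ u ∈ A ∧ v ∉ A}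

lemma card_cutEdges_le (A : Finset G.V) :
    #(G.cutEdges A) ≤ ∑ x ∈ A, ∑ w ∈ Aᶜ, G.numEdges x w := by
  classical
  have hsub : G.cutEdges A ⊆ (A ×ˢ Aᶜ).biUnion fun p => {e | G.ends e = s(p.1, p.2)} := by
    intro e he
    obtain ⟨u, v, huv, hu, hv⟩ := (mem_filter.mp he).2
    exact mem_biUnion.mpr
      ⟨(u, v), mem_product.mpr ⟨hu, mem_compl.mpr hv⟩, mem_filter.mpr ⟨mem_univ e, huv⟩⟩
  calc #(G.cutEdges A) ≤ ∑ p ∈ A ×ˢ Aᶜ, #{e | G.ends e = s(p.1, p.2)} :=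
        (card_le_card hsub).trans card_biUnion_le
    _ = ∑ x ∈ A, ∑ w ∈ Aᶜ, G.numEdges x w := by
        rw [sum_product]; simp only [numEdges_eq_card_filter]

lemma card_cutEdges_le_sum_laplacian (f : G.V → ℤ) {M : ℤ} (hM : ∀ v, f v ≤ M) :
    (#(G.cutEdges {v | f v = M}) : ℤ) ≤ ∑ x ∈ {v | f v = M}, G.laplacian f x := by
  set A : Finset G.V := {v | f v = M}
  have hsplit : ∑ x ∈ A, G.laplacian f x
      = ∑ x ∈ A, ∑ w ∈ A, (G.numEdges x w : ℤ) * (f x - f w)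
        + ∑ x ∈ A, ∑ w ∈ Aᶜ, (G.numEdges x w : ℤ) * (f x - f w) := by
    rw [← sum_add_distrib]
    exact sum_congr rfl fun x _ => (sum_add_sum_compl A _).symm
  rw [hsplit, sum_sum_numEdges_mul_sub, zero_add]
  refine (Nat.cast_le.mpr (card_cutEdges_le A)).trans ?_
  push_cast
  refine sum_le_sum fun x hx => sum_le_sum fun w hw => ?_
  have hx : f x = M := (mem_filter.mp hx).2
  have hw : f w ≠ M := fun h => (mem_compl.mp hw) (mem_filter.mpr ⟨mem_univ w, h⟩)
  have : 1 ≤ f x - f w := by have := hM w; omega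
  nlinarith [Int.natCast_nonneg (G.numEdges x w)]

lemma Effective.eq_of_linEquiv {D D' : G.Divisor} (hD : G.Effective D) (hD' : G.Effective D')
    (hcut : ∀ A : Finset G.V, A.Nonempty → A ≠ univ → G.degree D < #(G.cutEdges A))
    (h : G.LinEquiv D D') : D = D' := by
  obtain ⟨f, hf⟩ := h
  rcases isEmpty_or_nonempty G.V with hV | hV
  · exact funext hV.elim
  obtain ⟨v₀, -, hmax⟩ := exists_max_image univ f univ_nonempty
  set A : Finset G.V := {v | f v = f v₀}
  by_cases hA : A = univ
  · have hconst (v : G.V) : f v = f v₀ := by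
      have hv : v ∈ A := hA ▸ mem_univ v
      simpa [A] using hv
    refine funext fun v => sub_eq_zero.mp ?_
    rw [← Pi.sub_apply, hf]
    simp [laplacian, hconst]
  have hfire : (#(G.cutEdges A) : ℤ) ≤ ∑ x ∈ A, G.laplacian f x :=
    card_cutEdges_le_sum_laplacian f fun v => hmax v (mem_univ v)
  have hA_le : ∑ x ∈ A, G.laplacian f x ≤ G.degree D :=
    calc ∑ x ∈ A, G.laplacian f x = ∑ x ∈ A, (D x - D' x) := by rw [← hf]; rfl
      _ ≤ ∑ x ∈ A, D x := sum_le_sum fun x _ => sub_le_self _ (hD' x)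
      _ ≤ G.degree D := sum_le_sum_of_subset_of_nonneg (subset_univ A) fun x _ _ => hD x
  have := hcut A ⟨v₀, mem_filter.mpr ⟨mem_univ v₀, rfl⟩⟩ hA
  omega

lemma gonality_eq {n : ℕ} {D : G.Divisor} (hD : G.Effective D) (hdeg : G.degree D = n)
    (hrank : 1 ≤ G.rank D)
    (hmin : ∀ D' : G.Divisor, G.Effective D' → 1 ≤ G.rank D' → (n : ℤ) ≤ G.degree D') :
    G.gonality = n := by
  refine le_antisymm (Nat.sInf_le ⟨D, hD, hdeg, hrank⟩)
    (le_csInf ⟨n, D, hD, hdeg, hrank⟩ ?_)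
  rintro m ⟨D', hD', hdeg', hrank'⟩
  exact_mod_cast hdeg' ▸ hmin D' hD' hrank'

lemma le_degree_of_le_card_cutEdges [Nonempty G.V] {k : ℕ}
    (hcut : ∀ A : Finset G.V, A.Nonempty → A ≠ univ → k ≤ #(G.cutEdges A))
    (hk : k ≤ Fintype.card G.V) {D : G.Divisor} (hD : G.Effective D) (hrank : 1 ≤ G.rank D) :
    (k : ℤ) ≤ G.degree D := by
  by_contra! hlt
  have hchip (c : G.V) : 1 ≤ D c := by
    obtain ⟨E, hE, hDE⟩ := (le_rank_iff zero_le_one).mp hrank (Pi.single c 1)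
      (effective_single c zero_le_one) (degree_single c 1)
    have hDE' : G.LinEquiv D (E + Pi.single c 1) := by
      simpa only [sub_add_cancel] using hDE.add_right (Pi.single c 1)
    have hrigid := hD.eq_of_linEquiv (hE.add (effective_single c zero_le_one))
      (fun A hA hAu => hlt.trans_le (by exact_mod_cast hcut A hA hAu)) hDE'
    have := congrFun hrigid c
    simp only [Pi.add_apply, Pi.single_eq_same] at this
    linarith [hE c]
  have : (Fintype.card G.V : ℤ) ≤ G.degree D := by
    simpa [degree] using card_nsmul_le_sum univ D 1 fun c _ => hchip c
  omega

end Cuts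

section Trees

variable {G : Multigraph}

def simpleGraphWithout (G : Multigraph) (W : Set G.E) : SimpleGraph G.V :=
  SimpleGraph.fromEdgeSet (G.ends '' Wᶜ)

lemma simpleGraphWithout_adj {W : Set G.E} {u v : G.V} :
    (G.simpleGraphWithout W).Adj u v ↔ ∃ e ∉ W, G.ends e = s(u, v) := by
  rw [simpleGraphWithout, SimpleGraph.fromEdgeSet_adj]
  constructor
  · rintro ⟨⟨e, he, huv⟩, -⟩
    exact ⟨e, he, huv⟩
  · rintro ⟨e, he, huv⟩
    refine ⟨⟨e, he, huv⟩, fun h => G.loopless e ?_⟩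
    rw [huv, h]
    exact Sym2.mk_isDiag_iff.mpr rfl

lemma card_edgeSet_simpleGraphWithout_le (W : Set G.E) :
    Nat.card (G.simpleGraphWithout W).edgeSet ≤ Nat.card ↥Wᶜ := by
  rw [simpleGraphWithout, SimpleGraph.edgeSet_fromEdgeSet]
  exact (Nat.card_mono (Set.toFinite _) Set.sdiff_subset).trans
    (Nat.card_image_le (Set.toFinite _))

lemma ConnectedWithout.connected_simpleGraphWithout {W : Set G.E} (h : G.ConnectedWithout W) :
    (G.simpleGraphWithout W).Connected := by
  classical
  obtain ⟨hne, hcut⟩ := h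
  refine (SimpleGraph.connected_iff _).mpr ⟨fun u v => ?_, hne⟩
  set A : Finset G.V := {w | (G.simpleGraphWithout W).Reachable u w}
  suffices hA : A = univ by
    have hv : v ∈ A := hA ▸ mem_univ v
    simpa [A] using hv
  by_contra hA
  obtain ⟨e, he, a, b, hab, ha, hb⟩ := hcut A ⟨u, by simp [A]⟩ hA
  simp only [A, mem_filter, mem_univ, true_and] at ha hb
  exact hb (ha.trans (simpleGraphWithout_adj.mpr ⟨e, he, hab⟩).reachable)

lemma connectedWithout_singleton_of_reachable (hG : G.Connected) {e : G.E} {u v : G.V}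
    (he : G.ends e = s(u, v)) (h : (G.simpleGraphWithout {e}).Reachable u v) :
    G.ConnectedWithout {e} := by
  refine ⟨hG.1, fun A hA hAu => ?_⟩
  obtain ⟨e', -, a, b, hab, ha, hb⟩ := hG.2 A hA hAu
  by_cases he' : e' = e
  · -- the crossing edge is `e` itself, so a `u`-`v` walk avoiding `e` crosses `A` elsewhere
    have hwalk :
        ∃ x y : G.V, (G.simpleGraphWithout {e}).Reachable x y ∧ x ∈ A ∧ y ∉ A := by
      rw [he', he, Sym2.eq_iff] at hab
      rcases hab with ⟨rfl, rfl⟩ | ⟨rfl, rfl⟩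
      exacts [⟨u, v, h, ha, hb⟩, ⟨v, u, h.symm, ha, hb⟩]
    obtain ⟨x, y, ⟨p⟩, hx, hy⟩ := hwalk
    obtain ⟨d, -, hd₁, hd₂⟩ := p.exists_boundary_dart (A : Set G.V) hx hy
    obtain ⟨e'', he'', hd⟩ := simpleGraphWithout_adj.mp d.adj
    exact ⟨e'', he'', d.fst, d.snd, hd, hd₁, hd₂⟩
  · exact ⟨e', he', a, b, hab, ha, hb⟩

lemma IsTree.not_reachable_simpleGraphWithout (hT : G.IsTree) {e : G.E} {u v : G.V}
    (he : G.ends e = s(u, v)) : ¬ (G.simpleGraphWithout {e}).Reachable u v := by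
  intro h
  have hconn := (connectedWithout_singleton_of_reachable hT.1 he h).connected_simpleGraphWithout
  have hV := hconn.card_vert_le_card_edgeSet_add_one
  have hE := card_edgeSet_simpleGraphWithout_le ({e} : Set G.E)
  have hcompl : Nat.card ↥({e} : Set G.E)ᶜ + 1 = Fintype.card G.E := by
    rw [Nat.card_coe_set_eq, Set.ncard_compl, Set.ncard_singleton, Nat.card_eq_fintype_card]
    have : 0 < Fintype.card G.E := Fintype.card_pos_iff.mpr ⟨e⟩
    omega
  have hgenus := hT.2
  rw [genus] at hgenus
  rw [Nat.card_eq_fintype_card] at hV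
  omega

lemma numEdges_of_cutEdges_subset_singleton {S : Finset G.V} {e : G.E} {u v : G.V}
    (he : G.ends e = s(u, v)) (hv : v ∉ S) (hcut : G.cutEdges S ⊆ {e})
    {a b : G.V} (ha : a ∈ S) (hb : b ∉ S) :
    G.numEdges a b = if a = u ∧ b = v then 1 else 0 := by
  replace hcut (e' : G.E) (h : G.ends e' = s(a, b)) : e' = e :=
    mem_singleton.mp (hcut (mem_filter.mpr ⟨mem_univ e', a, b, h, ha, hb⟩))
  split_ifs with hab
  · obtain ⟨rfl, rfl⟩ := hab
    rw [numEdges, ← Set.ncard_singleton e]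
    congr 1
    ext e'
    exact ⟨hcut e', fun h => h ▸ he⟩
  · rw [numEdges, Set.ncard_eq_zero, Set.eq_empty_iff_forall_notMem]
    intro e' (h : G.ends e' = s(a, b))
    rw [hcut e' h, he, Sym2.eq_iff] at h
    rcases h with ⟨rfl, rfl⟩ | ⟨-, hva⟩
    exacts [hab ⟨rfl, rfl⟩, hv (hva ▸ ha)]

lemma laplacian_indicator_of_cutEdges_subset_singleton {S : Finset G.V} {e : G.E} {u v : G.V}
    (he : G.ends e = s(u, v)) (hu : u ∈ S) (hv : v ∉ S) (hcut : G.cutEdges S ⊆ {e}) :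
    G.laplacian (fun x => if x ∈ S then 1 else 0) = Pi.single u 1 - Pi.single v 1 := by
  have hnum {a b : G.V} := numEdges_of_cutEdges_subset_singleton he hv hcut (a := a) (b := b)
  have hterm (x w : G.V) :
      (G.numEdges x w : ℤ) * ((if x ∈ S then 1 else 0) - if w ∈ S then 1 else 0)
        = (if x = u ∧ w = v then 1 else 0) - if x = v ∧ w = u then 1 else 0 := by
    by_cases hx : x ∈ S <;> by_cases hw : w ∈ S
    · have hxv : x ≠ v := fun h => hv (h ▸ hx)
      have hwv : w ≠ v := fun h => hv (h ▸ hw)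
      simp [hx, hw, hxv, hwv]
    · have hxv : x ≠ v := fun h => hv (h ▸ hx)
      simp [hx, hw, hnum hx hw, hxv]
    · have hxu : x ≠ u := fun h => hx (h ▸ hu)
      rw [numEdges_comm, hnum hw hx]
      simp [hx, hw, hxu, and_comm]
    · have hxu : x ≠ u := fun h => hx (h ▸ hu)
      have hwu : w ≠ u := fun h => hw (h ▸ hu)
      simp [hx, hw, hxu, hwu]
  funext x
  simp only [laplacian, hterm, sum_sub_distrib, Pi.sub_apply, Pi.single_apply]
  simp [ite_and]

lemma IsTree.linEquiv_single_of_ends (hT : G.IsTree) {e : G.E} {u v : G.V}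
    (he : G.ends e = s(u, v)) : G.LinEquiv (Pi.single u 1) (Pi.single v 1) := by
  classical
  set S : Finset G.V := {w | (G.simpleGraphWithout {e}).Reachable u w}
  have hu : u ∈ S := by simp [S]
  have hv : v ∉ S := by simpa [S] using hT.not_reachable_simpleGraphWithout he
  refine ⟨fun x => if x ∈ S then 1 else 0,
    (laplacian_indicator_of_cutEdges_subset_singleton he hu hv fun e' hcut => ?_).symm⟩
  obtain ⟨a, b, hab, ha, hb⟩ := (mem_filter.mp hcut).2
  refine mem_singleton.mpr (by_contra fun he' => ?_)
  simp only [S, mem_filter, mem_univ, true_and] at ha hb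
  exact hb (ha.trans (simpleGraphWithout_adj.mpr ⟨e', he', hab⟩).reachable)

lemma IsTree.linEquiv_single (hT : G.IsTree) (v w : G.V) :
    G.LinEquiv (Pi.single v 1) (Pi.single w 1) := by
  classical
  set C : Finset G.V := {z | G.LinEquiv (Pi.single v 1) (Pi.single z 1)}
  suffices hC : C = univ by
    have hw : w ∈ C := hC ▸ mem_univ w
    simpa [C] using hw
  by_contra hC
  obtain ⟨e, -, a, b, hab, ha, hb⟩ := hT.1.2 C ⟨v, by simpa [C] using LinEquiv.refl _⟩ hC
  simp only [C, mem_filter, mem_univ, true_and] at ha hb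
  exact hb (ha.trans (hT.linEquiv_single_of_ends hab))

end Trees

section CartesianProduct

variable {G H : Multigraph}

lemma cartesianProduct_numEdges_of_fst_ne {p q : (cartesianProduct G H).V} (hpq : p.1 ≠ q.1) :
    (cartesianProduct G H).numEdges p q = if p.2 = q.2 then G.numEdges p.1 q.1 else 0 := by
  have hset : {e | (cartesianProduct G H).ends e = s(p, q)}
      = (fun e => Sum.inl (e, p.2)) '' {e : G.E | G.ends e = s(p.1, q.1) ∧ p.2 = q.2} := by
    ext e
    rcases e with ⟨e, w⟩ | ⟨v, f⟩
    · refine (Sym2.map_prodMk_left_eq_mk_iff (G.ends e) w p q).trans ⟨?_, ?_⟩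
      · rintro ⟨he, rfl, hq⟩
        exact ⟨e, ⟨he, hq⟩, rfl⟩
      · rintro ⟨e', ⟨he', hpq⟩, hee'⟩
        obtain ⟨rfl, rfl⟩ := Prod.mk.inj (Sum.inl_injective hee')
        exact ⟨he', rfl, hpq⟩
    · refine iff_of_false (fun h => hpq ?_) fun ⟨_, _, h⟩ => Sum.inl_ne_inr h
      have h' : Sym2.map (v, ·) (H.ends f) = s(p, q) := h
      have fst_eq (x : (cartesianProduct G H).V) (hx : x ∈ s(p, q)) : x.1 = v := by
        obtain ⟨_, -, rfl⟩ := Sym2.mem_map.mp (h'.symm ▸ hx)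
        rfl
      exact (fst_eq p (Sym2.mem_mk_left _ _)).trans (fst_eq q (Sym2.mem_mk_right _ _)).symm
  have hinj : Function.Injective fun e : G.E => (Sum.inl (e, p.2) : (cartesianProduct G H).E) :=
    fun e e' h => (Prod.mk.inj (Sum.inl_injective h)).1
  calc (cartesianProduct G H).numEdges p q
      = Set.ncard ((fun e => Sum.inl (e, p.2)) '' {e | G.ends e = s(p.1, q.1) ∧ p.2 = q.2}) :=
        congrArg Set.ncard hset
    _ = _ := by
      rw [Set.ncard_image_of_injective _ hinj]
      split_ifs with h
      · simp [h, numEdges]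
      · simp [h]

lemma cartesianProduct_laplacian_fst (g : G.V → ℤ) :
    (cartesianProduct G H).laplacian (fun p => g p.1) = fun p => G.laplacian g p.1 := by
  funext p
  change ∑ q : G.V × H.V, _ = ∑ w, _
  rw [Fintype.sum_prod_type]
  refine sum_congr rfl fun w _ => ?_
  rcases eq_or_ne p.1 w with hw | hw
  · simp [hw]
  · calc ∑ x : H.V, ((cartesianProduct G H).numEdges p (w, x) : ℤ) * (g p.1 - g w)
        = ∑ x : H.V, if p.2 = x then (G.numEdges p.1 w : ℤ) * (g p.1 - g w) else 0 := by
          refine sum_congr rfl fun x _ => ?_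
          rw [cartesianProduct_numEdges_of_fst_ne (q := ((w, x) : (cartesianProduct G H).V)) hw]
          split_ifs <;> simp
      _ = _ := by simp

lemma LinEquiv.cartesianProduct_fst {D D' : G.Divisor} (h : G.LinEquiv D D') :
    (cartesianProduct G H).LinEquiv (fun p => D p.1) (fun p => D' p.1) := by
  obtain ⟨g, hg⟩ := h
  exact ⟨fun p => g p.1, by rw [cartesianProduct_laplacian_fst, ← hg]; rfl⟩

def fibreDivisor (G H : Multigraph) (v : G.V) : (cartesianProduct G H).Divisor :=
  fun p => (Pi.single v 1 : G.Divisor) p.1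

lemma degree_fibreDivisor (v : G.V) :
    (cartesianProduct G H).degree (fibreDivisor G H v) = Fintype.card H.V := by
  change ∑ p : G.V × H.V, (Pi.single v 1 : G.Divisor) p.1 = _
  rw [Fintype.sum_prod_type]
  simp [Pi.single_apply]

lemma IsTree.one_le_rank_fibreDivisor [Nonempty H.V] (hG : G.IsTree) (v : G.V) :
    1 ≤ (cartesianProduct G H).rank (fibreDivisor G H v) := by
  have : Nonempty (cartesianProduct G H).V := ⟨(v, Classical.arbitrary H.V)⟩
  refine (le_rank_iff zero_le_one).mpr fun F hF hFdeg => ?_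
  obtain ⟨c, rfl⟩ := hF.eq_single_of_degree_eq_one hFdeg
  refine ⟨fibreDivisor G H c.1 - Pi.single c 1, fun p => ?_,
    (hG.linEquiv_single v c.1).cartesianProduct_fst.sub_right _⟩
  rcases eq_or_ne p c with rfl | hpc
  · simp [fibreDivisor]
  · simp only [fibreDivisor, Pi.sub_apply, Pi.single_apply, hpc, if_false, sub_zero]
    split_ifs <;> omega

lemma effective_fibreDivisor (v : G.V) :
    (cartesianProduct G H).Effective (fibreDivisor G H v) :=
  fun p => effective_single v zero_le_one p.1

variable {A : Finset (cartesianProduct G H).V}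

lemma inl_mem_cutEdges {e : G.E} {u u' : G.V} (he : G.ends e = s(u, u')) {i : H.V}
    (hu : ((u, i) : (cartesianProduct G H).V) ∈ A)
    (hu' : ((u', i) : (cartesianProduct G H).V) ∉ A) :
    Sum.inl (e, i) ∈ (cartesianProduct G H).cutEdges A :=
  mem_filter.mpr ⟨mem_univ _, (u, i), (u', i),
    show Sym2.map (·, i) (G.ends e) = _ by rw [he]; rfl, hu, hu'⟩

lemma inr_mem_cutEdges {f : H.E} {i j : H.V} (hf : H.ends f = s(i, j)) {v : G.V}
    (hi : ((v, i) : (cartesianProduct G H).V) ∈ A)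
    (hj : ((v, j) : (cartesianProduct G H).V) ∉ A) :
    Sum.inr (v, f) ∈ (cartesianProduct G H).cutEdges A :=
  mem_filter.mpr ⟨mem_univ _, (v, i), (v, j),
    show Sym2.map (v, ·) (H.ends f) = _ by rw [hf]; rfl, hi, hj⟩

lemma Connected.exists_inl_mem_cutEdges (hG : G.Connected) {i : H.V}
    (hin : ∃ u, ((u, i) : (cartesianProduct G H).V) ∈ A)
    (hout : ∃ u, ((u, i) : (cartesianProduct G H).V) ∉ A) :
    ∃ e, Sum.inl (e, i) ∈ (cartesianProduct G H).cutEdges A := by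
  classical
  obtain ⟨u, hu⟩ := hin
  obtain ⟨u', hu'⟩ := hout
  set S : Finset G.V := {w | ((w, i) : (cartesianProduct G H).V) ∈ A}
  have hS : S ≠ univ := fun h => by
    have : u' ∈ S := h ▸ mem_univ u'
    exact hu' (by simpa [S] using this)
  obtain ⟨e, -, a, b, hab, ha, hb⟩ := hG.2 S ⟨u, by simpa [S] using hu⟩ hS
  simp only [S, mem_filter, mem_univ, true_and] at ha hb
  exact ⟨e, inl_mem_cutEdges hab ha hb⟩

end CartesianProduct

section K3

variable {G : Multigraph} {A : Finset (cartesianProduct G K3).V}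

lemma exists_two_inr_mem_cutEdges {v : G.V}
    (hin : ∃ i, ((v, i) : (cartesianProduct G K3).V) ∈ A)
    (hout : ∃ j, ((v, j) : (cartesianProduct G K3).V) ∉ A) :
    ∃ k₁ k₂, k₁ ≠ k₂ ∧ Sum.inr (v, k₁) ∈ (cartesianProduct G K3).cutEdges A ∧
      Sum.inr (v, k₂) ∈ (cartesianProduct G K3).cutEdges A := by
  classical
  set p : Fin 3 → Bool := fun i => decide (((v, i) : (cartesianProduct G K3).V) ∈ A)
  have hmem (k : Fin 3) (hk : p (k + 1) ≠ p (k + 2)) :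
      Sum.inr (v, k) ∈ (cartesianProduct G K3).cutEdges A := by
    by_cases h : ((v, k + 1) : (cartesianProduct G K3).V) ∈ A
    · exact inr_mem_cutEdges (rfl : K3.ends k = s(k + 1, k + 2)) h
        fun h' => hk ((decide_eq_true h).trans (decide_eq_true h').symm)
    · refine inr_mem_cutEdges (Sym2.eq_swap : K3.ends k = s(k + 2, k + 1)) ?_ h
      by_contra h'
      exact hk ((decide_eq_false h).trans (decide_eq_false h').symm)
  obtain ⟨i, hi⟩ := hin
  obtain ⟨j, hj⟩ := hout
  obtain ⟨k₁, k₂, hk, hk₁, hk₂⟩ :=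
    Fin.exists_two_add_one_ne_add_two p ⟨i, j, by simp [p, hi, hj]⟩
  exact ⟨k₁, k₂, hk, hmem k₁ hk₁, hmem k₂ hk₂⟩

lemma Connected.three_le_card_cutEdges_K3 (hG : G.Connected) (hcard : 2 ≤ Fintype.card G.V)
    (hA : A.Nonempty) (hAu : A ≠ univ) : 3 ≤ #((cartesianProduct G K3).cutEdges A) := by
  suffices ∃ e₁ ∈ (cartesianProduct G K3).cutEdges A,
      ∃ e₂ ∈ (cartesianProduct G K3).cutEdges A,
      ∃ e₃ ∈ (cartesianProduct G K3).cutEdges A, e₁ ≠ e₂ ∧ e₁ ≠ e₃ ∧ e₂ ≠ e₃ by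
    obtain ⟨e₁, h₁, e₂, h₂, e₃, h₃, h₁₂, h₁₃, h₂₃⟩ := this
    exact two_lt_card_iff.mpr ⟨e₁, e₂, e₃, h₁, h₂, h₃, h₁₂, h₁₃, h₂₃⟩
  by_cases hsplit : ∃ v : G.V, (∃ i, ((v, i) : (cartesianProduct G K3).V) ∈ A) ∧
      ∃ j, ((v, j) : (cartesianProduct G K3).V) ∉ A
  · obtain ⟨v, ⟨i, hi⟩, ⟨j, hj⟩⟩ := hsplit
    obtain ⟨k₁, k₂, hk, h₁, h₂⟩ := exists_two_inr_mem_cutEdges ⟨i, hi⟩ ⟨j, hj⟩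
    by_cases hlayer : ∃ l : Fin 3, (∃ u, ((u, l) : (cartesianProduct G K3).V) ∈ A) ∧
        ∃ u, ((u, l) : (cartesianProduct G K3).V) ∉ A
    · obtain ⟨l, hin, hout⟩ := hlayer
      obtain ⟨e, h₃⟩ := hG.exists_inl_mem_cutEdges hin hout
      exact ⟨_, h₁, _, h₂, _, h₃, fun h => hk (congrArg Prod.snd (Sum.inr_injective h)),
        (Sum.inl_ne_inr ·.symm), (Sum.inl_ne_inr ·.symm)⟩
    · -- layer `i` lies in `A` and layer `j` misses it, so every fibre is split
      push Not at hlayer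
      obtain ⟨w, hw⟩ := Fintype.exists_ne_of_one_lt_card hcard v
      obtain ⟨k₃, -, -, h₃, -⟩ := exists_two_inr_mem_cutEdges (v := w)
        ⟨i, hlayer i ⟨v, hi⟩ w⟩ ⟨j, fun h => hj (by simpa using hlayer j ⟨w, h⟩ v)⟩
      exact ⟨_, h₁, _, h₂, _, h₃, fun h => hk (congrArg Prod.snd (Sum.inr_injective h)),
        fun h => hw (congrArg Prod.fst (Sum.inr_injective h)).symm,
        fun h => hw (congrArg Prod.fst (Sum.inr_injective h)).symm⟩
  · -- `A` is a union of fibres, so each of the three layers is split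
    push Not at hsplit
    obtain ⟨⟨a, i⟩, ha⟩ := hA
    obtain ⟨⟨b, j⟩, hb⟩ := not_forall.mp fun h => hAu (eq_univ_iff_forall.mpr h)
    have hlayer (l : Fin 3) : ∃ e, Sum.inl (e, l) ∈ (cartesianProduct G K3).cutEdges A :=
      hG.exists_inl_mem_cutEdges ⟨a, hsplit a ⟨i, ha⟩ l⟩
        ⟨b, fun h => hb (hsplit b ⟨l, h⟩ j)⟩
    obtain ⟨e₀, h₀⟩ := hlayer 0
    obtain ⟨e₁, h₁⟩ := hlayer 1
    obtain ⟨e₂, h₂⟩ := hlayer 2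
    have hne {l l' : Fin 3} (hl : l ≠ l') {e e' : G.E} :
        (Sum.inl (e, l) : (cartesianProduct G K3).E) ≠ Sum.inl (e', l') :=
      fun h => hl (congrArg Prod.snd (Sum.inl_injective h))
    exact ⟨_, h₀, _, h₁, _, h₂, hne (by decide), hne (by decide), hne (by decide)⟩

end K3

end Multigraph

/-- If `T` is a tree with at least two vertices, then
`gon(T □ K₃) = 3`. -/
theorem stmt_16 (T : Multigraph) (hT : T.IsTree) (hcard : 2 ≤ Fintype.card T.V) :
    (cartesianProduct T K3).gonality = 3 := by
  obtain ⟨v⟩ : Nonempty T.V := Fintype.card_pos_iff.mp (by omega)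
  have : Nonempty K3.V := ⟨(0 : Fin 3)⟩
  have : Nonempty (cartesianProduct T K3).V := ⟨(v, (0 : Fin 3))⟩
  have hV : 3 ≤ Fintype.card (cartesianProduct T K3).V := by
    change 3 ≤ Fintype.card (T.V × Fin 3)
    rw [Fintype.card_prod, Fintype.card_fin]
    omega
  refine Multigraph.gonality_eq (Multigraph.effective_fibreDivisor v)
    (Multigraph.degree_fibreDivisor v) (hT.one_le_rank_fibreDivisor v) fun D hD hrank => ?_
  exact Multigraph.le_degree_of_le_card_cutEdges
    (fun A hA hAu => hT.1.three_le_card_cutEdges_K3 hcard hA hAu) hV hD hrank
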